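/- Let Y and Z be closed projective elements of 𝓢^q (taken with disjoint supports). Then Y * Z is not closed. -/

import Mathlib

open Equiv Pointwise

namespace FPS

/-- The support of a permutation of `ℕ`. -/
def psupp (ρ : Equiv.Perm ℕ) : Set ℕ := {ω | ρ ω ≠ ω}

/-- The support of a set of permutations of `ℕ`. -/
def ssupp (X : Set (Equiv.Perm ℕ)) : Set ℕ := ⋃ ρ ∈ X, psupp ρ

/-- `Sym(α)`: the subgroup of permutations of `ℕ` supported on the subset `α`. -/
def symOn (α : Set ℕ) : Subgroup (Equiv.Perm ℕ) where
  carrier := {g | ∀ ω, ω ∉ α → g ω = ω}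
  one_mem' := fun _ _ => rfl
  mul_mem' := by
    intro a b ha hb ω hω
    have hbω := hb ω hω
    have haω := ha ω hω
    show a (b ω) = ω
    rw [hbω, haω]
  inv_mem' := by
    intro a ha ω hω
    have haω := ha ω hω
    show a⁻¹ ω = ω
    nth_rewrite 1 [← haω]
    exact Equiv.symm_apply_apply a ω

/-- Membership in the family `𝓕`: finite nonempty sets of finitary permutations,
different from `{1}`. -/
def memF (X : Set (Equiv.Perm ℕ)) : Prop :=
  X.Finite ∧ X.Nonempty ∧ X ≠ {1} ∧ ∀ ρ ∈ X, (psupp ρ).Finite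

/-- Membership in `𝓢^q`: members of `𝓕` all of whose elements are products of `q`-cycles
(each orbit on the support has size `q`) with full support. -/
def memS (q : ℕ) (X : Set (Equiv.Perm ℕ)) : Prop :=
  memF X ∧ (∀ ρ ∈ X, psupp ρ = ssupp X) ∧
    ∀ ρ ∈ X, ∀ ω ∈ psupp ρ, (Set.range fun n : ℤ => (ρ ^ n) ω).ncard = q

/-- Right conjugation `x ↦ x^g = g⁻¹ x g`. -/
def conjR (g x : Equiv.Perm ℕ) : Equiv.Perm ℕ := g⁻¹ * x * g

/-- Conjugate of a set of permutations: `X^g`. -/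
def conjSet (g : Equiv.Perm ℕ) (X : Set (Equiv.Perm ℕ)) : Set (Equiv.Perm ℕ) := conjR g '' X

/-- The setwise stabilizer (under conjugation) of a set of permutations,
as a subgroup of the full group `Sym(ℕ)`. -/
def setStab (X : Set (Equiv.Perm ℕ)) : Subgroup (Equiv.Perm ℕ) where
  carrier := {g | ∀ x, x ∈ X ↔ g⁻¹ * x * g ∈ X}
  one_mem' := by
    intro x
    simp
  mul_mem' := by
    intro a b ha hb x
    have h1 := ha x
    have h2 := hb (a⁻¹ * x * a)
    have e : b⁻¹ * (a⁻¹ * x * a) * b = (a * b)⁻¹ * x * (a * b) := by group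
    rw [e] at h2
    exact h1.trans h2
  inv_mem' := by
    intro a ha x
    have h := ha (a * x * a⁻¹)
    have e : a⁻¹ * (a * x * a⁻¹) * a = x := by group
    rw [e] at h
    have e2 : a * x * a⁻¹ = a⁻¹⁻¹ * x * a⁻¹ := by group
    rw [e2] at h
    exact h.symm

/-- `N_X`: the stabilizer of `X` in `G_X = Sym(supp X)`. -/
def NX (X : Set (Equiv.Perm ℕ)) : Subgroup (Equiv.Perm ℕ) := symOn (ssupp X) ⊓ setStab X

/-- `S_X = C_{G_X}(X)`: the pointwise centralizer of `X` in `G_X = Sym(supp X)`. -/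
def SX (X : Set (Equiv.Perm ℕ)) : Subgroup (Equiv.Perm ℕ) :=
  symOn (ssupp X) ⊓ Subgroup.centralizer X

/-- `Q` is a Sylow `p`-subgroup of the subgroup `H` (that is, a maximal `p`-subgroup of `H`). -/
def IsSylowOf {G : Type*} [Group G] (p : ℕ) (Q H : Subgroup G) : Prop :=
  Q ≤ H ∧ IsPGroup p Q ∧ ∀ R : Subgroup G, R ≤ H → IsPGroup p R → Q ≤ R → R = Q

/-- `Ξ_X = ⋃_{g ∈ G_X} X^g`. -/
def Xi (X : Set (Equiv.Perm ℕ)) : Set (Equiv.Perm ℕ) :=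
  ⋃ g ∈ (symOn (ssupp X) : Set (Equiv.Perm ℕ)), conjSet g X

/-- `X` is closed: `C_{G_X}(Q_X) ∩ Ξ_X = X` for (any) Sylow `p`-subgroup `Q_X` of `S_X`. -/
def IsClosedSet (p : ℕ) (X : Set (Equiv.Perm ℕ)) : Prop :=
  ∀ Q : Subgroup (Equiv.Perm ℕ), IsSylowOf p Q (SX X) →
    (Subgroup.centralizer (Q : Set (Equiv.Perm ℕ)) : Set (Equiv.Perm ℕ)) ∩ Xi X = X

/-- `X` is exact: `supp Q_X = supp X` for (any) Sylow `p`-subgroup `Q_X` of `S_X`. -/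
def IsExactSet (p : ℕ) (X : Set (Equiv.Perm ℕ)) : Prop :=
  ∀ Q : Subgroup (Equiv.Perm ℕ), IsSylowOf p Q (SX X) →
    ssupp (Q : Set (Equiv.Perm ℕ)) = ssupp X

/-- `X` is projective: `Q_X = 1`. -/
def IsProjectiveSet (p : ℕ) (X : Set (Equiv.Perm ℕ)) : Prop :=
  ∀ Q : Subgroup (Equiv.Perm ℕ), IsSylowOf p Q (SX X) → Q = ⊥

/-- `X ∈ 𝓕` is irreducible if it is not a product of two members of `𝓕`
with disjoint supports. -/
def IsIrred (X : Set (Equiv.Perm ℕ)) : Prop :=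
  memF X ∧ ∀ Y Z : Set (Equiv.Perm ℕ), memF Y → memF Z →
    Disjoint (ssupp Y) (ssupp Z) → X ≠ Y * Z

/-- Two sets of permutations are equivalent if they are conjugate in `Sym(ℕ)`. -/
def EquivSet (X Y : Set (Equiv.Perm ℕ)) : Prop := ∃ g : Equiv.Perm ℕ, conjSet g X = Y

/-- `D` is a realization of `Δ^s X`: the diagonal of a product of `s` disjointly
supported conjugates of `X`. -/
def IsDelta (s : ℕ) (X D : Set (Equiv.Perm ℕ)) : Prop :=
  ∃ g : Fin s → Equiv.Perm ℕ,
    (∀ i j, i ≠ j → Disjoint (ssupp (conjSet (g i) X)) (ssupp (conjSet (g j) X))) ∧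
    D = (fun x => (List.ofFn fun i => conjR (g i) x).prod) '' X

/-- `D` is a realization of the `a`-fold `*`-power `X^a`: a product of `a` disjointly
supported conjugates of `X`. -/
def IsStarPow (a : ℕ) (X D : Set (Equiv.Perm ℕ)) : Prop :=
  ∃ g : Fin a → Equiv.Perm ℕ,
    (∀ i j, i ≠ j → Disjoint (ssupp (conjSet (g i) X)) (ssupp (conjSet (g j) X))) ∧
    D = (List.ofFn fun i => conjSet (g i) X).prod

/-- `X` is a transitive set: `⟨X⟩` is transitive on `supp X`. -/
def TransitiveSet (X : Set (Equiv.Perm ℕ)) : Prop :=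
  ∀ a ∈ ssupp X, ∀ b ∈ ssupp X, ∃ g ∈ Subgroup.closure X, g a = b

lemma mem_setStab {X : Set (Equiv.Perm ℕ)} {g : Equiv.Perm ℕ} :
    g ∈ setStab X ↔ ∀ x, x ∈ X ↔ g⁻¹ * x * g ∈ X := Iff.rfl

lemma conjR_mem {X : Set (Equiv.Perm ℕ)} {g : Equiv.Perm ℕ} (hg : g ∈ setStab X)
    {x : Equiv.Perm ℕ} (hx : x ∈ X) : g⁻¹ * x * g ∈ X :=
  (mem_setStab.mp hg x).mp hx

lemma conjL_mem {X : Set (Equiv.Perm ℕ)} {g : Equiv.Perm ℕ} (hg : g ∈ setStab X)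
    {x : Equiv.Perm ℕ} (hx : x ∈ X) : g * x * g⁻¹ ∈ X := by
  have h := mem_setStab.mp ((setStab X).inv_mem hg) x
  rw [inv_inv] at h
  exact h.mp hx

/-- The permutation of `X` induced by conjugation by an element of `N_X`. -/
def conjPerm (X : Set (Equiv.Perm ℕ)) (g : NX X) : Equiv.Perm X where
  toFun x := ⟨(g : Equiv.Perm ℕ) * x * (g : Equiv.Perm ℕ)⁻¹,
    conjL_mem (Subgroup.mem_inf.mp g.2).2 x.2⟩
  invFun x := ⟨(g : Equiv.Perm ℕ)⁻¹ * x * (g : Equiv.Perm ℕ),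
    conjR_mem (Subgroup.mem_inf.mp g.2).2 x.2⟩
  left_inv x := by
    apply Subtype.ext
    show (g : Equiv.Perm ℕ)⁻¹ * ((g : Equiv.Perm ℕ) * x * (g : Equiv.Perm ℕ)⁻¹) *
      (g : Equiv.Perm ℕ) = x
    group
  right_inv x := by
    apply Subtype.ext
    show (g : Equiv.Perm ℕ) * ((g : Equiv.Perm ℕ)⁻¹ * x * (g : Equiv.Perm ℕ)) *
      (g : Equiv.Perm ℕ)⁻¹ = x
    group

/-- The action of `N_X` on `X` by conjugation, as a homomorphism `N_X →* Sym(X)`. -/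
def MXhom (X : Set (Equiv.Perm ℕ)) : NX X →* Equiv.Perm X where
  toFun := conjPerm X
  map_one' := by
    apply Equiv.ext
    intro x
    apply Subtype.ext
    show ((1 : NX X) : Equiv.Perm ℕ) * x * ((1 : NX X) : Equiv.Perm ℕ)⁻¹ = x
    simp
  map_mul' a b := by
    apply Equiv.ext
    intro x
    apply Subtype.ext
    show ((a * b : NX X) : Equiv.Perm ℕ) * x * ((a * b : NX X) : Equiv.Perm ℕ)⁻¹
      = (a : Equiv.Perm ℕ) * ((b : Equiv.Perm ℕ) * x * (b : Equiv.Perm ℕ)⁻¹) *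
        (a : Equiv.Perm ℕ)⁻¹
    push_cast
    group

/-- `M_X = N_X/S_X`, realized as the image of `N_X` in `Sym(X)` (the action of `N_X`
on `X` is by conjugation, with kernel `S_X`). -/
def MX (X : Set (Equiv.Perm ℕ)) : Subgroup (Equiv.Perm X) := (MXhom X).range

/-- The permutation module `k[Ω]` of the `G`-set `Ω` has a nonzero projective direct summand. -/
def HasProjSummand (k : Type) [Field k] (G : Type*) [Group G] (Ω : Type*) [MulAction G Ω] :
    Prop :=
  ∃ P W : Submodule (MonoidAlgebra k G) (Representation.ofMulAction k G Ω).asModule,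
    IsCompl P W ∧ P ≠ ⊥ ∧ Module.Projective (MonoidAlgebra k G) P

/-- `X` is a fixed point set: `X ∈ 𝓢^q`, `X` is closed, and the permutation
`k M_X`-module `k[X]` has a nonzero projective direct summand. -/
def IsFPS (p q : ℕ) (k : Type) [Field k] (X : Set (Equiv.Perm ℕ)) : Prop :=
  memS q X ∧ IsClosedSet p X ∧ HasProjSummand k (MX X) X

/-- `X` and `Y` (with disjoint supports) are coprime: `N_{X*Y} = N_X × N_Y`. -/
def CoprimeSets (X Y : Set (Equiv.Perm ℕ)) : Prop := NX (X * Y) = NX X ⊔ NX Y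

/-- `X` is projective-free: no factor in a decomposition of `X` into irreducibles
is projective. -/
def ProjFree (p : ℕ) (X : Set (Equiv.Perm ℕ)) : Prop :=
  ∀ L : List (Set (Equiv.Perm ℕ)), (∀ Y ∈ L, IsIrred Y) →
    L.Pairwise (fun A B => Disjoint (ssupp A) (ssupp B)) →
    X = L.prod → ∀ Y ∈ L, ¬ IsProjectiveSet p Y


/-! ### Auxiliary lemmas -/

section Aux

variable {X Y Z : Set (Equiv.Perm ℕ)} {p q : ℕ}

lemma mem_psupp {ρ : Perm ℕ} {ω : ℕ} : ω ∈ psupp ρ ↔ ρ ω ≠ ω := Iff.rfl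

lemma fix_of_not_mem_psupp {ρ : Perm ℕ} {ω : ℕ} (h : ω ∉ psupp ρ) : ρ ω = ω :=
  not_not.mp h

lemma apply_mem_psupp {ρ : Perm ℕ} {ω : ℕ} (h : ω ∈ psupp ρ) : ρ ω ∈ psupp ρ := by
  intro hcon
  exact h (ρ.injective hcon)

lemma inv_apply_mem_psupp {ρ : Perm ℕ} {ω : ℕ} (h : ω ∈ psupp ρ) : ρ⁻¹ ω ∈ psupp ρ := by
  simp only [mem_psupp, show ρ (ρ⁻¹ ω) = ω from Equiv.apply_symm_apply ρ ω]
  intro hcon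
  apply h
  conv_lhs => rw [hcon]
  exact ρ.apply_symm_apply ω

lemma psupp_subset_ssupp {ρ : Perm ℕ} (h : ρ ∈ X) : psupp ρ ⊆ ssupp X :=
  Set.subset_biUnion_of_mem h

lemma mem_ssupp {ω : ℕ} : ω ∈ ssupp X ↔ ∃ ρ ∈ X, ω ∈ psupp ρ := by
  simp [ssupp]

lemma mul_comm_of_disjoint {a b : Perm ℕ}
    (hd : ∀ ω, ω ∈ psupp a → ω ∈ psupp b → False) : a * b = b * a := by
  ext ω
  simp only [Equiv.Perm.mul_apply]
  by_cases ha : ω ∈ psupp a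
  · have hb : b ω = ω := fix_of_not_mem_psupp (fun hb => hd ω ha hb)
    have h2 : a ω ∉ psupp b := fun hb => hd _ (apply_mem_psupp ha) hb
    rw [hb, fix_of_not_mem_psupp h2]
  · by_cases hb : ω ∈ psupp b
    · have h2 : b ω ∉ psupp a := fun ha' => hd _ ha' (apply_mem_psupp hb)
      rw [fix_of_not_mem_psupp ha, fix_of_not_mem_psupp h2]
    · rw [fix_of_not_mem_psupp hb, fix_of_not_mem_psupp ha, fix_of_not_mem_psupp hb]

lemma psupp_mul_subset {a b : Perm ℕ} : psupp (a * b) ⊆ psupp a ∪ psupp b := by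
  intro ω hω
  by_contra hcon
  rw [Set.mem_union] at hcon
  push_neg at hcon
  apply hω
  show a (b ω) = ω
  rw [fix_of_not_mem_psupp hcon.2, fix_of_not_mem_psupp hcon.1]

lemma psupp_inv {a : Perm ℕ} : psupp a⁻¹ = psupp a := by
  ext ω
  simp only [mem_psupp]
  constructor
  · intro h hcon
    apply h
    conv_lhs => rw [← hcon]
    exact a.symm_apply_apply ω
  · intro h hcon
    apply h
    conv_lhs => rw [← hcon]
    exact a.apply_symm_apply ω

lemma psupp_mul_eq {a b : Perm ℕ}
    (hd : ∀ ω, ω ∈ psupp a → ω ∈ psupp b → False) :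
    psupp (a * b) = psupp a ∪ psupp b := by
  apply Set.Subset.antisymm psupp_mul_subset
  intro ω hω
  rcases hω with ha | hb
  · have hb : b ω = ω := fix_of_not_mem_psupp (fun hb => hd ω ha hb)
    show a (b ω) ≠ ω
    rw [hb]; exact ha
  · have ha : ω ∉ psupp a := fun ha => hd ω ha hb
    show a (b ω) ≠ ω
    have h2 : b ω ∉ psupp a := fun ha' => hd _ ha' (apply_mem_psupp hb)
    rw [fix_of_not_mem_psupp h2]
    exact hb

lemma ssupp_finite (hX : memF X) : (ssupp X).Finite :=
  Set.Finite.biUnion hX.1 (fun ρ hρ => hX.2.2.2 ρ hρ)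

lemma ssupp_nonempty (hX : memS q X) : (ssupp X).Nonempty := by
  by_contra h
  rw [Set.not_nonempty_iff_eq_empty] at h
  apply hX.1.2.2.1
  apply Set.eq_singleton_iff_nonempty_unique_mem.mpr
  refine ⟨hX.1.2.1, ?_⟩
  intro ρ hρ
  have hps : psupp ρ = ∅ := by rw [hX.2.1 ρ hρ, h]
  ext ω
  have hns : ω ∉ psupp ρ := by rw [hps]; exact Set.notMem_empty ω
  simpa using fix_of_not_mem_psupp hns

lemma mem_symOn {α : Set ℕ} {g : Perm ℕ} : g ∈ symOn α ↔ ∀ ω, ω ∉ α → g ω = ω := Iff.rfl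

lemma symOn_apply_mem {α : Set ℕ} {g : Perm ℕ} (hg : g ∈ symOn α) {δ : ℕ}
    (hδ : δ ∈ α) : g δ ∈ α := by
  by_contra h
  have h1 : g (g δ) = g δ := hg (g δ) h
  have h2 : g δ = δ := g.injective h1
  exact h (by rw [h2]; exact hδ)

lemma ssupp_mul (hY : memS q Y) (hZ : memS q Z) (hdisj : Disjoint (ssupp Y) (ssupp Z)) :
    ssupp (Y * Z) = ssupp Y ∪ ssupp Z := by
  have hd : ∀ y ∈ Y, ∀ z ∈ Z, ∀ ω, ω ∈ psupp y → ω ∈ psupp z → False := by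
    intro y hy z hz ω h1 h2
    exact Set.disjoint_left.mp hdisj (psupp_subset_ssupp hy h1) (psupp_subset_ssupp hz h2)
  ext ω
  simp only [mem_ssupp, Set.mem_union]
  constructor
  · rintro ⟨ρ, hρ, hρω⟩
    rcases Set.mem_mul.mp hρ with ⟨y, hy, z, hz, rfl⟩
    rw [psupp_mul_eq (hd y hy z hz)] at hρω
    rcases hρω with h | h
    · exact Or.inl ⟨y, hy, h⟩
    · exact Or.inr ⟨z, hz, h⟩
  · rintro (⟨y, hy, h⟩ | ⟨z, hz, h⟩)
    · obtain ⟨z, hz⟩ := hZ.1.2.1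
      exact ⟨y * z, Set.mul_mem_mul hy hz,
        by rw [psupp_mul_eq (hd y hy z hz)]; exact Or.inl h⟩
    · obtain ⟨y, hy⟩ := hY.1.2.1
      exact ⟨y * z, Set.mul_mem_mul hy hz,
        by rw [psupp_mul_eq (hd y hy z hz)]; exact Or.inr h⟩

/-! ### Sylow subgroups exist -/

lemma exists_isSylowOf (p : ℕ) (H : Subgroup (Equiv.Perm ℕ)) :
    ∃ Q : Subgroup (Equiv.Perm ℕ), IsSylowOf p Q H := by
  have hbot : IsPGroup p (⊥ : Subgroup (Equiv.Perm ℕ)) := by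
    intro g
    refine ⟨0, ?_⟩
    have hg1 : (g : Equiv.Perm ℕ) = 1 := Subgroup.mem_bot.mp g.2
    rw [pow_zero, pow_one]
    exact Subtype.ext hg1
  have hub : ∀ c ⊆ {R : Subgroup (Equiv.Perm ℕ) | R ≤ H ∧ IsPGroup p R},
      IsChain (· ≤ ·) c → ∀ y ∈ c,
      ∃ ub ∈ {R : Subgroup (Equiv.Perm ℕ) | R ≤ H ∧ IsPGroup p R}, ∀ z ∈ c, z ≤ ub := by
    intro c hcs hchain y hy
    refine ⟨sSup c, ⟨sSup_le (fun R hR => (hcs hR).1), ?_⟩, fun z hz => le_sSup hz⟩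
    intro g
    have hg : (g : Equiv.Perm ℕ) ∈ sSup c := g.2
    rw [Subgroup.mem_sSup_of_directedOn ⟨y, hy⟩ hchain.directedOn] at hg
    obtain ⟨R, hRc, hgR⟩ := hg
    obtain ⟨k, hk⟩ := (hcs hRc).2 ⟨(g : Equiv.Perm ℕ), hgR⟩
    have hcoe : ((⟨(g : Equiv.Perm ℕ), hgR⟩ : R) : Equiv.Perm ℕ) ^ p ^ k = 1 := by
      rw [← SubgroupClass.coe_pow, hk, OneMemClass.coe_one]
    refine ⟨k, Subtype.ext ?_⟩
    rw [SubgroupClass.coe_pow, OneMemClass.coe_one]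
    exact hcoe
  obtain ⟨m, -, hm⟩ := zorn_le_nonempty₀
      {R : Subgroup (Equiv.Perm ℕ) | R ≤ H ∧ IsPGroup p R} hub ⊥ ⟨bot_le, hbot⟩
  exact ⟨m, hm.1.1, hm.1.2, fun R hRH hRp hmR =>
    le_antisymm (hm.2 ⟨hRH, hRp⟩ hmR) hmR⟩

lemma isPGroup_zpowers {k : ℕ} {h : Perm ℕ} (hk : h ^ p ^ k = 1) :
    IsPGroup p (Subgroup.zpowers h) := by
  intro g
  obtain ⟨n, hn⟩ := Subgroup.mem_zpowers_iff.mp g.2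
  refine ⟨k, Subtype.ext ?_⟩
  rw [SubgroupClass.coe_pow, OneMemClass.coe_one, ← hn]
  rw [← zpow_natCast (h ^ n) (p ^ k), ← zpow_mul, mul_comm, zpow_mul, zpow_natCast, hk,
    one_zpow]

lemma isSylowOf_bot_of_projective (hXp : IsProjectiveSet p X) :
    IsSylowOf p ⊥ (SX X) := by
  obtain ⟨Q, hQ⟩ := exists_isSylowOf p (SX X)
  have hb := hXp Q hQ
  rwa [hb] at hQ

lemma eq_one_of_pgroup (hXp : IsProjectiveSet p X) {h : Perm ℕ} (hh : h ∈ SX X)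
    {k : ℕ} (hk : h ^ p ^ k = 1) : h = 1 := by
  have hs := isSylowOf_bot_of_projective hXp
  have hb := hs.2.2 (Subgroup.zpowers h) (Subgroup.zpowers_le.mpr hh)
    (isPGroup_zpowers hk) bot_le
  rwa [Subgroup.zpowers_eq_bot] at hb

/-! ### Closedness and `Ξ` -/

lemma mem_xi_of_conj {g x : Perm ℕ} (hg : g ∈ symOn (ssupp X)) (hx : x ∈ X) :
    g⁻¹ * x * g ∈ Xi X :=
  Set.mem_biUnion hg ⟨x, hx, rfl⟩

lemma centralizer_coe_bot :
    Subgroup.centralizer (((⊥ : Subgroup (Equiv.Perm ℕ)) : Set (Equiv.Perm ℕ))) = ⊤ := by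
  ext g
  simp [Subgroup.mem_centralizer_iff]

lemma xi_eq_of_closed_projective (hc : IsClosedSet p X) (hproj : IsProjectiveSet p X) :
    Xi X = X := by
  have h := hc ⊥ (isSylowOf_bot_of_projective hproj)
  rw [centralizer_coe_bot, Subgroup.coe_top, Set.univ_inter] at h
  exact h

lemma conj_mem_of_xi_eq (hXi : Xi X = X) {t x : Perm ℕ}
    (ht : t ∈ symOn (ssupp X)) (hx : x ∈ X) : t⁻¹ * x * t ∈ X := by
  rw [← hXi]; exact mem_xi_of_conj ht hx

/-! ### The size dichotomy -/

lemma dichotomy (hq : 2 ≤ q) (hX : memS q X) :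
    3 ≤ (ssupp X).ncard ∨ ∃ a b : ℕ, a ≠ b ∧ ssupp X = {a, b} ∧ X = {Equiv.swap a b} := by
  by_cases h3 : 3 ≤ (ssupp X).ncard
  · exact Or.inl h3
  right
  push_neg at h3
  obtain ⟨ρ, hρ⟩ := hX.1.2.1
  have hps : psupp ρ = ssupp X := hX.2.1 ρ hρ
  obtain ⟨ω, hω⟩ := ssupp_nonempty hX
  have hωρ : ω ∈ psupp ρ := by rw [hps]; exact hω
  have hOcard : (Set.range fun n : ℤ => (ρ ^ n) ω).ncard = q := hX.2.2 ρ hρ ω hωρ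
  have hOsub : (Set.range fun n : ℤ => (ρ ^ n) ω) ⊆ psupp ρ := by
    rintro _ ⟨n, rfl⟩
    intro hcon
    have hcomm : ρ * ρ ^ n = ρ ^ n * ρ := ((Commute.refl ρ).zpow_right n).eq
    have h1 : ρ ((ρ ^ n) ω) = (ρ ^ n) (ρ ω) := by
      rw [← Equiv.Perm.mul_apply, ← Equiv.Perm.mul_apply, hcomm]
    rw [h1] at hcon
    exact hωρ ((ρ ^ n).injective hcon)
  have hfin : (psupp ρ).Finite := hX.1.2.2.2 ρ hρ
  have hq2 : q ≤ (ssupp X).ncard := by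
    calc q = (Set.range fun n : ℤ => (ρ ^ n) ω).ncard := hOcard.symm
    _ ≤ (psupp ρ).ncard := Set.ncard_le_ncard hOsub hfin
    _ = (ssupp X).ncard := by rw [hps]
  have hcard2 : (ssupp X).ncard = 2 := by omega
  have hne : ρ ω ≠ ω := hωρ
  have hsub : ({ω, ρ ω} : Set ℕ) ⊆ ssupp X := by
    intro x hx
    simp only [Set.mem_insert_iff, Set.mem_singleton_iff] at hx
    rw [← hps]
    rcases hx with rfl | rfl
    · exact hωρ
    · exact apply_mem_psupp hωρ
  have hpair : ({ω, ρ ω} : Set ℕ).ncard = 2 := Set.ncard_pair (Ne.symm hne)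
  have hXfin : (ssupp X).Finite := ssupp_finite hX.1
  have hset : ({ω, ρ ω} : Set ℕ) = ssupp X :=
    Set.eq_of_subset_of_ncard_le hsub (by omega) hXfin
  refine ⟨ω, ρ ω, Ne.symm hne, hset.symm, ?_⟩
  have hall : ∀ σ ∈ X, σ = Equiv.swap ω (ρ ω) := by
    intro σ hσ
    have hpsσ : psupp σ = {ω, ρ ω} := by rw [hX.2.1 σ hσ, ← hset]
    have hωσ : ω ∈ psupp σ := by rw [hpsσ]; exact Set.mem_insert _ _
    have hρωσ : ρ ω ∈ psupp σ := by
      rw [hpsσ]; exact Set.mem_insert_iff.mpr (Or.inr rfl)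
    ext x
    by_cases hx : x ∈ psupp σ
    · rw [hpsσ] at hx
      simp only [Set.mem_insert_iff, Set.mem_singleton_iff] at hx
      rcases hx with h | h
      · have h1 : σ ω ∈ ({ω, ρ ω} : Set ℕ) := by
          rw [← hpsσ]; exact apply_mem_psupp hωσ
        simp only [Set.mem_insert_iff, Set.mem_singleton_iff] at h1
        rw [h, Equiv.swap_apply_left]
        rcases h1 with h1 | h1
        · exact absurd h1 hωσ
        · exact h1
      · have h1 : σ (ρ ω) ∈ ({ω, ρ ω} : Set ℕ) := by
          rw [← hpsσ]; exact apply_mem_psupp hρωσ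
        simp only [Set.mem_insert_iff, Set.mem_singleton_iff] at h1
        rw [h, Equiv.swap_apply_right]
        rcases h1 with h1 | h1
        · exact h1
        · exact absurd h1 hρωσ
    · have h1 : σ x = x := fix_of_not_mem_psupp hx
      rw [hpsσ] at hx
      simp only [Set.mem_insert_iff, Set.mem_singleton_iff] at hx
      push_neg at hx
      rw [h1, Equiv.swap_apply_of_ne_of_ne hx.1 hx.2]
  apply Set.eq_singleton_iff_unique_mem.mpr
  exact ⟨by rw [← hall ρ hρ]; exact hρ, hall⟩

end Aux
/-! ### Support preservation for centralizing elements -/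

section Preserve

variable {Y Z : Set (Equiv.Perm ℕ)} {p q : ℕ}

/-- If `|supp Y| ≥ 3` and `Y` is conjugation-invariant, then any permutation commuting
with all products `y * z` maps `supp Y` into itself. -/
lemma preserve_big (hY : memS q Y) (hZ : memS q Z)
    (hdisj : Disjoint (ssupp Y) (ssupp Z)) (hYXi : Xi Y = Y)
    (h3 : 3 ≤ (ssupp Y).ncard)
    {g : Perm ℕ} (hgc : ∀ y ∈ Y, ∀ z ∈ Z, g * (y * z) = (y * z) * g)
    {δ : ℕ} (hδ : δ ∈ ssupp Y) : g δ ∈ ssupp Y := by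
  obtain ⟨y, hy⟩ := hY.1.2.1
  have hps : psupp y = ssupp Y := hY.2.1 y hy
  have hδy : δ ∈ psupp y := by rw [hps]; exact hδ
  have hδε : δ ≠ y δ := Ne.symm hδy
  -- a third point ζ
  obtain ⟨ζ, hζY, hζδ, hζε⟩ : ∃ ζ, ζ ∈ ssupp Y ∧ ζ ≠ δ ∧ ζ ≠ y δ := by
    have hne : ((ssupp Y) \ {δ, y δ}).Nonempty := by
      by_contra hcon
      rw [Set.not_nonempty_iff_eq_empty, Set.diff_eq_empty] at hcon
      have h1 : (ssupp Y).ncard ≤ ({δ, y δ} : Set ℕ).ncard :=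
        Set.ncard_le_ncard hcon (Set.toFinite _)
      have h2 : ({δ, y δ} : Set ℕ).ncard ≤ 2 := by
        apply le_trans (Set.ncard_insert_le _ _)
        simp [Set.ncard_singleton]
      omega
    obtain ⟨ζ, hζ⟩ := hne
    simp only [Set.mem_diff, Set.mem_insert_iff, Set.mem_singleton_iff] at hζ
    push_neg at hζ
    exact ⟨ζ, hζ.1, hζ.2.1, hζ.2.2⟩
  have htmem : Equiv.swap (y δ) ζ ∈ symOn (ssupp Y) := by
    intro ω hω
    apply Equiv.swap_apply_of_ne_of_ne
    · rintro rfl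
      exact hω (by rw [← hps]; exact apply_mem_psupp hδy)
    · rintro rfl
      exact hω hζY
  have hy'Y : (Equiv.swap (y δ) ζ)⁻¹ * y * Equiv.swap (y δ) ζ ∈ Y :=
    conj_mem_of_xi_eq hYXi htmem hy
  set y' := (Equiv.swap (y δ) ζ)⁻¹ * y * Equiv.swap (y δ) ζ with hy'def
  -- the element c = y⁻¹ * y' moves δ and is supported in supp Y
  have hy'δ : y' δ = ζ := by
    rw [hy'def, Equiv.swap_inv]
    simp only [Equiv.Perm.mul_apply]
    rw [Equiv.swap_apply_of_ne_of_ne hδε (Ne.symm hζδ), Equiv.swap_apply_left]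
  have hcδ : (y⁻¹ * y') δ ≠ δ := by
    simp only [Equiv.Perm.mul_apply, hy'δ]
    intro hcon
    apply hζε
    rw [← hcon, show y (y⁻¹ ζ) = ζ from y.apply_symm_apply ζ]
  have hsub : psupp (y⁻¹ * y') ⊆ ssupp Y := by
    intro ω hω
    rcases psupp_mul_subset hω with h | h
    · rw [psupp_inv] at h
      rw [← hps]; exact h
    · rw [← hY.2.1 y' hy'Y]; exact h
  -- g commutes with c
  have hccomm : Commute g (y⁻¹ * y') := by
    obtain ⟨z, hz⟩ := hZ.1.2.1
    have h1 : Commute g (y * z) := hgc y hy z hz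
    have h2 : Commute g (y' * z) := hgc y' hy'Y z hz
    have hzy' : (y⁻¹ * y') * z = z * (y⁻¹ * y') := by
      apply mul_comm_of_disjoint
      intro ω hω1 hω2
      exact Set.disjoint_left.mp hdisj (hsub hω1) (psupp_subset_ssupp hz hω2)
    have hkey : (y * z)⁻¹ * (y' * z) = y⁻¹ * y' := by
      have e1 : (y * z)⁻¹ * (y' * z) = z⁻¹ * ((y⁻¹ * y') * z) := by group
      rw [e1, hzy']
      group
    have hC : Commute g ((y * z)⁻¹ * (y' * z)) := (h1.inv_right).mul_right h2
    rwa [hkey] at hC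
  have h2 : (y⁻¹ * y') (g δ) = g ((y⁻¹ * y') δ) := by
    rw [← Equiv.Perm.mul_apply, ← Equiv.Perm.mul_apply, ← hccomm.eq]
  have h3' : g δ ∈ psupp (y⁻¹ * y') := by
    rw [mem_psupp, h2]
    intro hcon
    exact hcδ (g.injective hcon)
  exact hsub h3'

/-- If `g` preserves the (finite) set `supp Y` then it cannot map a point of `supp Z`
into `supp Y`. -/
lemma other_side (hYf : (ssupp Y).Finite) (hdisj : Disjoint (ssupp Y) (ssupp Z))
    {g : Perm ℕ} (hU : ∀ ω ∈ ssupp Z, g ω ∈ ssupp Y ∪ ssupp Z)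
    (hgY : ∀ δ ∈ ssupp Y, g δ ∈ ssupp Y) {δ : ℕ} (hδ : δ ∈ ssupp Z) :
    g δ ∈ ssupp Z := by
  rcases hU δ hδ with h | h
  · exfalso
    have himg : g '' ssupp Y = ssupp Y :=
      Set.eq_of_subset_of_ncard_le (by rintro _ ⟨x, hx, rfl⟩; exact hgY x hx)
        (by rw [Set.ncard_image_of_injective _ g.injective]) hYf
    rw [← himg] at h
    obtain ⟨x, hx, hgx⟩ := h
    obtain rfl := g.injective hgx
    exact Set.disjoint_left.mp hdisj hx hδ
  · exact h

/-- In the degenerate case where both `Y` and `Z` are single transpositions,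
an element of odd `p`-power order commuting with the product cannot interchange
the two supports. -/
lemma small_no_cross (hp : p.Prime) {a b c d : ℕ}
    (hab : a ≠ b) (hcd : c ≠ d) (hYs : ssupp Y = {a, b}) (hZs : ssupp Z = {c, d})
    (hYe : Y = {Equiv.swap a b}) (hZe : Z = {Equiv.swap c d})
    (hdisj : Disjoint (ssupp Y) (ssupp Z))
    (hYp : IsProjectiveSet p Y)
    {g : Perm ℕ} (hgU : ∀ ω ∈ ssupp Y ∪ ssupp Z, g ω ∈ ssupp Y ∪ ssupp Z)
    (hgc : g * (Equiv.swap a b * Equiv.swap c d) = (Equiv.swap a b * Equiv.swap c d) * g)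
    {k : ℕ} (hgpow : g ^ p ^ k = 1)
    {δ₀ : ℕ} (hδ₀ : δ₀ ∈ ssupp Y) : g δ₀ ∈ ssupp Y := by
  by_contra hcross
  -- basic membership facts
  have haY : a ∈ ssupp Y := by rw [hYs]; exact Set.mem_insert _ _
  have hbY : b ∈ ssupp Y := by rw [hYs]; exact Set.mem_insert_iff.mpr (Or.inr rfl)
  have hcZ : c ∈ ssupp Z := by rw [hZs]; exact Set.mem_insert _ _
  have hdZ : d ∈ ssupp Z := by rw [hZs]; exact Set.mem_insert_iff.mpr (Or.inr rfl)
  have hac : a ≠ c := fun h => Set.disjoint_left.mp hdisj haY (by rw [h]; exact hcZ)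
  have had : a ≠ d := fun h => Set.disjoint_left.mp hdisj haY (by rw [h]; exact hdZ)
  have hbc : b ≠ c := fun h => Set.disjoint_left.mp hdisj hbY (by rw [h]; exact hcZ)
  have hbd : b ≠ d := fun h => Set.disjoint_left.mp hdisj hbY (by rw [h]; exact hdZ)
  -- p is odd
  have hp2 : p ≠ 2 := by
    intro hp2
    have hswapS : Equiv.swap a b ∈ SX Y := by
      refine Subgroup.mem_inf.mpr ⟨?_, ?_⟩
      · intro ω hω
        rw [hYs] at hω
        simp only [Set.mem_insert_iff, Set.mem_singleton_iff] at hω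
        push_neg at hω
        exact Equiv.swap_apply_of_ne_of_ne hω.1 hω.2
      · rw [Subgroup.mem_centralizer_iff]
        intro w hw
        rw [hYe, Set.mem_singleton_iff] at hw
        rw [hw]
    have hpow : Equiv.swap a b ^ p ^ 1 = 1 := by
      rw [hp2, pow_one, sq, Equiv.swap_mul_self]
    have h1 : Equiv.swap a b = 1 := eq_one_of_pgroup hYp hswapS hpow
    apply hab
    have := congrArg (fun f : Perm ℕ => f a) h1
    simpa [Equiv.swap_apply_left] using this.symm
  have hoddpk : Odd (p ^ k) := (hp.odd_of_ne_two hp2).pow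
  -- w = swap a b * swap c d
  set w := Equiv.swap a b * Equiv.swap c d with hwdef
  have hwa : w a = b := by
    rw [hwdef]
    simp only [Equiv.Perm.mul_apply]
    rw [Equiv.swap_apply_of_ne_of_ne hac had, Equiv.swap_apply_left]
  have hwb : w b = a := by
    rw [hwdef]
    simp only [Equiv.Perm.mul_apply]
    rw [Equiv.swap_apply_of_ne_of_ne hbc hbd, Equiv.swap_apply_right]
  have hwc : w c = d := by
    rw [hwdef]
    simp only [Equiv.Perm.mul_apply]
    rw [Equiv.swap_apply_left, Equiv.swap_apply_of_ne_of_ne (Ne.symm had) (Ne.symm hbd)]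
  have hwd : w d = c := by
    rw [hwdef]
    simp only [Equiv.Perm.mul_apply]
    rw [Equiv.swap_apply_right, Equiv.swap_apply_of_ne_of_ne (Ne.symm hac) (Ne.symm hbc)]
  have hgw : ∀ ω, g (w ω) = w (g ω) := by
    intro ω
    have := congrArg (fun f : Perm ℕ => f ω) hgc
    simpa [Equiv.Perm.mul_apply] using this
  have hZw : ∀ x ∈ ssupp Z, w x ∈ ssupp Z := by
    intro x hx
    rw [hZs] at hx ⊢
    simp only [Set.mem_insert_iff, Set.mem_singleton_iff] at hx ⊢
    rcases hx with rfl | rfl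
    · rw [hwc]; exact Or.inr rfl
    · rw [hwd]; exact Or.inl rfl
  have hgδ₀Z : g δ₀ ∈ ssupp Z := by
    rcases hgU δ₀ (Or.inl hδ₀) with h | h
    · exact absurd h hcross
    · exact h
  -- every point of supp Y maps into supp Z
  have hYtoZ : ∀ ω ∈ ssupp Y, g ω ∈ ssupp Z := by
    intro ω hω
    have hwδ₀Z : g (w δ₀) ∈ ssupp Z := by rw [hgw δ₀]; exact hZw _ hgδ₀Z
    have hset : ω = δ₀ ∨ ω = w δ₀ := by
      rw [hYs] at hω
      have hδ₀' : δ₀ ∈ ({a, b} : Set ℕ) := by rw [← hYs]; exact hδ₀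
      simp only [Set.mem_insert_iff, Set.mem_singleton_iff] at hω hδ₀'
      rcases hδ₀' with h | h
      · rw [h, hwa]
        tauto
      · rw [h, hwb]
        tauto
    rcases hset with rfl | rfl
    · exact hgδ₀Z
    · exact hwδ₀Z
  -- every point of supp Z maps into supp Y
  have hZtoY : ∀ ω ∈ ssupp Z, g ω ∈ ssupp Y := by
    intro ω hω
    rcases hgU ω (Or.inr hω) with h | h
    · exact h
    · exfalso
      have h1 : g a ∈ ssupp Z := hYtoZ a haY
      have h2 : g b ∈ ssupp Z := hYtoZ b hbY
      have hωa : ω ≠ a := fun hh => Set.disjoint_left.mp hdisj (by rw [hh]; exact haY) hω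
      have hωb : ω ≠ b := fun hh => Set.disjoint_left.mp hdisj (by rw [hh]; exact hbY) hω
      rw [hZs] at h1 h2 h
      simp only [Set.mem_insert_iff, Set.mem_singleton_iff] at h1 h2 h
      rcases h1 with h1 | h1 <;> rcases h2 with h2 | h2 <;> rcases h with h | h <;>
        first
          | exact hab (g.injective (h1.trans h2.symm))
          | exact hωa (g.injective (h.trans h1.symm))
          | exact hωb (g.injective (h.trans h2.symm))
  -- parity argument
  have hpar : ∀ m : ℕ, (Even m → (g ^ m) δ₀ ∈ ssupp Y) ∧ (Odd m → (g ^ m) δ₀ ∈ ssupp Z) := by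
    intro m
    induction m with
    | zero =>
      refine ⟨fun _ => by simpa using hδ₀, fun ho => absurd ho (by simp)⟩
    | succ n ih =>
      have happ : (g ^ (n + 1)) δ₀ = g ((g ^ n) δ₀) := by
        rw [pow_succ']
        simp [Equiv.Perm.mul_apply]
      constructor
      · intro he
        have hon : Odd n := by
          rw [Nat.even_iff] at he
          rw [Nat.odd_iff]
          omega
        rw [happ]
        exact hZtoY _ (ih.2 hon)
      · intro ho
        have hen : Even n := by
          rw [Nat.odd_iff] at ho
          rw [Nat.even_iff]
          omega
        rw [happ]
        exact hYtoZ _ (ih.1 hen)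
  have hfin := (hpar (p ^ k)).2 hoddpk
  rw [hgpow] at hfin
  simp only [Equiv.Perm.one_apply] at hfin
  exact Set.disjoint_left.mp hdisj hδ₀ hfin

/-- The restriction of a centralizing `p`-element to `supp Y` is a `p`-element of `S_Y`,
hence trivial when `Y` is projective. -/
lemma restricted_trivial (hY : memS q Y) (hZ : memS q Z)
    (hdisj : Disjoint (ssupp Y) (ssupp Z)) (hYp : IsProjectiveSet p Y)
    {g : Perm ℕ} (hgc : ∀ y ∈ Y, ∀ z ∈ Z, g * (y * z) = (y * z) * g)
    (hgY : ∀ δ ∈ ssupp Y, g δ ∈ ssupp Y)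
    {k : ℕ} (hgpow : g ^ p ^ k = 1) :
    ∀ δ ∈ ssupp Y, g δ = δ := by
  classical
  have hiff : ∀ x : ℕ, x ∈ ssupp Y ↔ g x ∈ ssupp Y := by
    intro x
    constructor
    · exact hgY x
    · intro hx
      have himg : g '' ssupp Y = ssupp Y :=
        Set.eq_of_subset_of_ncard_le (by rintro _ ⟨u, hu, rfl⟩; exact hgY u hu)
          (by rw [Set.ncard_image_of_injective _ g.injective]) (ssupp_finite hY.1)
      rw [← himg] at hx
      obtain ⟨u, hu, hux⟩ := hx
      obtain rfl := g.injective hux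
      exact hu
  set g₁ : Perm ℕ := Equiv.Perm.ofSubtype (g.subtypePerm (fun x => (hiff x).symm)) with hg₁def
  have hg₁_mem : ∀ x, x ∈ ssupp Y → g₁ x = g x := fun x hx =>
    Equiv.Perm.ofSubtype_subtypePerm_of_mem (fun x => (hiff x).symm) hx
  have hg₁_nmem : ∀ x, x ∉ ssupp Y → g₁ x = x := fun x hx =>
    Equiv.Perm.ofSubtype_subtypePerm_of_not_mem (fun x => (hiff x).symm) hx
  have hg₁S : g₁ ∈ SX Y := by
    refine Subgroup.mem_inf.mpr ⟨?_, ?_⟩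
    · intro ω hω
      exact hg₁_nmem ω hω
    · rw [Subgroup.mem_centralizer_iff]
      intro y hy
      obtain ⟨z, hz⟩ := hZ.1.2.1
      have hyz := hgc y hy z hz
      ext ω
      simp only [Equiv.Perm.mul_apply]
      by_cases hω : ω ∈ ssupp Y
      · have hgym : g ω ∈ ssupp Y := hgY ω hω
        have hyω : y ω ∈ ssupp Y := by
          rw [← hY.2.1 y hy] at hω ⊢
          exact apply_mem_psupp hω
        rw [hg₁_mem ω hω, hg₁_mem (y ω) hyω]
        have hpt := congrArg (fun f : Perm ℕ => f ω) hyz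
        simp only [Equiv.Perm.mul_apply] at hpt
        have hzω : z ω = ω := fix_of_not_mem_psupp
          (fun hmem => Set.disjoint_left.mp hdisj hω (psupp_subset_ssupp hz hmem))
        have hzgω : z (g ω) = g ω := fix_of_not_mem_psupp
          (fun hmem => Set.disjoint_left.mp hdisj hgym (psupp_subset_ssupp hz hmem))
        rw [hzω, hzgω] at hpt
        exact hpt.symm
      · rw [hg₁_nmem ω hω]
        have hyω : y ω = ω := fix_of_not_mem_psupp
          (by rw [hY.2.1 y hy]; exact hω)
        rw [hyω, hg₁_nmem ω hω]
  have hg₁pow : g₁ ^ p ^ k = 1 := by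
    rw [hg₁def, ← map_pow, Equiv.Perm.subtypePerm_pow]
    ext x
    by_cases hx : x ∈ ssupp Y
    · rw [Equiv.Perm.ofSubtype_apply_of_mem _ hx]
      simp [Equiv.Perm.subtypePerm_apply, hgpow]
    · rw [Equiv.Perm.ofSubtype_apply_of_not_mem _ hx]
      simp
  have hg₁1 : g₁ = 1 := eq_one_of_pgroup hYp hg₁S hg₁pow
  intro δ hδ
  have := hg₁_mem δ hδ
  rw [hg₁1] at this
  simpa using this.symm

end Preserve
/-- If `Y` and `Z` are closed projective elements of `𝓢^q` with disjoint supports,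
then `Y * Z` is not closed. -/
theorem stmt_9 (p q : ℕ) (hp : p.Prime) (hq : 2 ≤ q) (Y Z : Set (Equiv.Perm ℕ))
    (hY : memS q Y) (hZ : memS q Z) (hdisj : Disjoint (ssupp Y) (ssupp Z))
    (hYc : IsClosedSet p Y) (hZc : IsClosedSet p Z)
    (hYp : IsProjectiveSet p Y) (hZp : IsProjectiveSet p Z) :
    ¬ IsClosedSet p (Y * Z) := by
  intro hc
  have hUYZ : ssupp (Y * Z) = ssupp Y ∪ ssupp Z := ssupp_mul hY hZ hdisj
  have hXiY : Xi Y = Y := xi_eq_of_closed_projective hYc hYp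
  have hXiZ : Xi Z = Z := xi_eq_of_closed_projective hZc hZp
  obtain ⟨Q, hQ⟩ := exists_isSylowOf p (SX (Y * Z))
  -- Step I : the Sylow subgroup `Q` of `S_{Y*Z}` is trivial.
  have hQbot : Q = ⊥ := by
    rw [Subgroup.eq_bot_iff_forall]
    intro g hg
    obtain ⟨hgsym, hgcent⟩ := Subgroup.mem_inf.mp (hQ.1 hg)
    rw [hUYZ] at hgsym
    have hgc : ∀ y ∈ Y, ∀ z ∈ Z, g * (y * z) = (y * z) * g := by
      intro y hy z hz
      exact (Subgroup.mem_centralizer_iff.mp hgcent (y * z) (Set.mul_mem_mul hy hz)).symm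
    have hcommYZ : ∀ y ∈ Y, ∀ z ∈ Z, y * z = z * y := fun y hy z hz =>
      mul_comm_of_disjoint (fun ω h1 h2 =>
        Set.disjoint_left.mp hdisj (psupp_subset_ssupp hy h1) (psupp_subset_ssupp hz h2))
    have hgc' : ∀ z ∈ Z, ∀ y ∈ Y, g * (z * y) = (z * y) * g := by
      intro z hz y hy
      rw [← hcommYZ y hy z hz]
      exact hgc y hy z hz
    obtain ⟨k, hk⟩ := hQ.2.1 ⟨g, hg⟩
    have hgpow : g ^ p ^ k = 1 := by
      have := Subtype.ext_iff.mp hk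
      simpa using this
    have hgU : ∀ ω ∈ ssupp Y ∪ ssupp Z, g ω ∈ ssupp Y ∪ ssupp Z := fun ω hω =>
      symOn_apply_mem hgsym hω
    -- `g` preserves both supports
    have key : (∀ δ ∈ ssupp Y, g δ ∈ ssupp Y) ∧ (∀ δ ∈ ssupp Z, g δ ∈ ssupp Z) := by
      rcases dichotomy hq hY with h3Y | ⟨a, b, hab, hYs, hYe⟩
      · have hgY : ∀ δ ∈ ssupp Y, g δ ∈ ssupp Y := fun δ hδ =>
          preserve_big hY hZ hdisj hXiY h3Y hgc hδ
        exact ⟨hgY, fun δ hδ =>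
          other_side (ssupp_finite hY.1) hdisj (fun ω hω => hgU ω (Or.inr hω)) hgY hδ⟩
      · rcases dichotomy hq hZ with h3Z | ⟨c, d, hcd, hZs, hZe⟩
        · have hgZ : ∀ δ ∈ ssupp Z, g δ ∈ ssupp Z := fun δ hδ =>
            preserve_big hZ hY hdisj.symm hXiZ h3Z hgc' hδ
          refine ⟨fun δ hδ => ?_, hgZ⟩
          have := other_side (ssupp_finite hZ.1) hdisj.symm
            (fun ω hω => (hgU ω (Or.inl hω)).elim Or.inr Or.inl) hgZ hδ
          exact this
        · have hgY : ∀ δ ∈ ssupp Y, g δ ∈ ssupp Y := by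
            intro δ hδ
            have hswapmemY : Equiv.swap a b ∈ Y := by rw [hYe]; rfl
            have hswapmemZ : Equiv.swap c d ∈ Z := by rw [hZe]; rfl
            exact small_no_cross hp hab hcd hYs hZs hYe hZe hdisj hYp hgU
              (hgc _ hswapmemY _ hswapmemZ) hgpow hδ
          exact ⟨hgY, fun δ hδ =>
            other_side (ssupp_finite hY.1) hdisj (fun ω hω => hgU ω (Or.inr hω)) hgY hδ⟩
    have hYfix := restricted_trivial hY hZ hdisj hYp hgc key.1 hgpow
    have hZfix := restricted_trivial hZ hY hdisj.symm hZp hgc' key.2 hgpow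
    ext ω
    simp only [Equiv.Perm.one_apply]
    by_cases h1 : ω ∈ ssupp Y
    · exact hYfix ω h1
    · by_cases h2 : ω ∈ ssupp Z
      · exact hZfix ω h2
      · exact hgsym ω (fun hmem => hmem.elim h1 h2)
  -- Step II : closedness forces `Ξ_{Y*Z} = Y*Z`.
  have hXiYZ : Xi (Y * Z) = Y * Z := by
    have h := hc Q hQ
    rw [hQbot, centralizer_coe_bot, Subgroup.coe_top, Set.univ_inter] at h
    exact h
  -- Step III : produce a conjugate of `Y*Z` escaping `Y*Z`.
  obtain ⟨y, hy⟩ := hY.1.2.1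
  obtain ⟨z, hz⟩ := hZ.1.2.1
  obtain ⟨α, hα⟩ := ssupp_nonempty hY
  obtain ⟨γ, hγ⟩ := ssupp_nonempty hZ
  have hpsy : psupp y = ssupp Y := hY.2.1 y hy
  have hαy : α ∈ psupp y := by rw [hpsy]; exact hα
  have htU : Equiv.swap α γ ∈ symOn (ssupp (Y * Z)) := by
    intro ω hω
    rw [hUYZ] at hω
    apply Equiv.swap_apply_of_ne_of_ne
    · rintro rfl
      exact hω (Or.inl hα)
    · rintro rfl
      exact hω (Or.inr hγ)
  have hw : (Equiv.swap α γ)⁻¹ * (y * z) * Equiv.swap α γ ∈ Xi (Y * Z) :=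
    mem_xi_of_conj htU (Set.mul_mem_mul hy hz)
  rw [hXiYZ] at hw
  obtain ⟨y', hy', z', hz', hw'⟩ := Set.mem_mul.mp hw
  -- evaluate both sides at `ω₀ = y⁻¹ α`
  have hω₀psupp : y⁻¹ α ∈ psupp y := inv_apply_mem_psupp hαy
  have hω₀Y : y⁻¹ α ∈ ssupp Y := by rw [← hpsy]; exact hω₀psupp
  have hω₀α : y⁻¹ α ≠ α := by
    intro h
    apply hαy
    conv_lhs => rw [← h]
    exact y.apply_symm_apply α
  have hω₀γ : y⁻¹ α ≠ γ := fun h =>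
    Set.disjoint_left.mp hdisj hω₀Y (by rw [h]; exact hγ)
  have hval : ((Equiv.swap α γ)⁻¹ * (y * z) * Equiv.swap α γ) (y⁻¹ α) = γ := by
    rw [Equiv.swap_inv]
    simp only [Equiv.Perm.mul_apply]
    rw [Equiv.swap_apply_of_ne_of_ne hω₀α hω₀γ]
    have hzfix : z (y⁻¹ α) = y⁻¹ α := fix_of_not_mem_psupp
      (fun hmem => Set.disjoint_left.mp hdisj hω₀Y (psupp_subset_ssupp hz hmem))
    rw [hzfix, show y (y⁻¹ α) = α from y.apply_symm_apply α, Equiv.swap_apply_left]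
  have hval2 : (y' * z') (y⁻¹ α) ∈ ssupp Y := by
    have hz'fix : z' (y⁻¹ α) = y⁻¹ α := fix_of_not_mem_psupp
      (fun hmem => Set.disjoint_left.mp hdisj hω₀Y (psupp_subset_ssupp hz' hmem))
    have happ : (y' * z') (y⁻¹ α) = y' (y⁻¹ α) := by
      rw [Equiv.Perm.mul_apply, hz'fix]
    rw [happ]
    have h1 : y⁻¹ α ∈ psupp y' := by rw [hY.2.1 y' hy']; exact hω₀Y
    have h2 : y' (y⁻¹ α) ∈ psupp y' := apply_mem_psupp h1
    rw [← hY.2.1 y' hy']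
    exact h2
  rw [hw', hval] at hval2
  exact Set.disjoint_left.mp hdisj hval2 hγ

end FPS
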